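/- Local confluence of R_B: for all DeMorgan formulas t, u, u', if t →_{R_B} u and t →_{R_B} u' (single steps), then there exists a formula v with u →*_{R_B} v and u' →*_{R_B} v. -/

import Mathlib

/-- DeMorgan formulas: variables, constants 0 and 1, negation, conjunction, disjunction. -/
inductive Fm : Type
  | var : ℕ → Fm
  | zero : Fm
  | one : Fm
  | not : Fm → Fm
  | and : Fm → Fm → Fm
  | or : Fm → Fm → Fm
deriving DecidableEq

/-- Evaluation of a DeMorgan formula under an assignment. -/
def Fm.eval (σ : ℕ → Bool) : Fm → Bool
  | .var n => σ n
  | .zero => false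
  | .one => true
  | .not t => !(t.eval σ)
  | .and t u => t.eval σ && u.eval σ
  | .or t u => t.eval σ || u.eval σ

/-- The root rewrite rules of the term rewriting system `R_B`
(the rule variable `g` stands for an arbitrary formula). -/
inductive RB : Fm → Fm → Prop
  | zero_def : RB .zero (.not .one)
  | not_not (g : Fm) : RB (.not (.not g)) g
  | and_idem (g : Fm) : RB (.and g g) g
  | or_idem (g : Fm) : RB (.or g g) g
  | and_notone_r (g : Fm) : RB (.and g (.not .one)) (.not .one)
  | and_notone_l (g : Fm) : RB (.and (.not .one) g) (.not .one)
  | or_one_r (g : Fm) : RB (.or g .one) .one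
  | or_one_l (g : Fm) : RB (.or .one g) .one
  | and_one_r (g : Fm) : RB (.and g .one) g
  | and_one_l (g : Fm) : RB (.and .one g) g
  | or_notone_r (g : Fm) : RB (.or g (.not .one)) g
  | or_notone_l (g : Fm) : RB (.or (.not .one) g) g
  | and_not_self_r (g : Fm) : RB (.and g (.not g)) (.not .one)
  | and_not_self_l (g : Fm) : RB (.and (.not g) g) (.not .one)
  | or_not_self_r (g : Fm) : RB (.or g (.not g)) .one
  | or_not_self_l (g : Fm) : RB (.or (.not g) g) .one

/-- One rewrite step of `R_B`: a rule applied to a single subterm. -/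
inductive Step : Fm → Fm → Prop
  | rule {t u : Fm} : RB t u → Step t u
  | not {t u : Fm} : Step t u → Step (.not t) (.not u)
  | and_left {t t' u : Fm} : Step t t' → Step (.and t u) (.and t' u)
  | and_right {t u u' : Fm} : Step u u' → Step (.and t u) (.and t u')
  | or_left {t t' u : Fm} : Step t t' → Step (.or t u) (.or t' u)
  | or_right {t u u' : Fm} : Step u u' → Step (.or t u) (.or t u')

/-- The reflexive transitive closure of one-step rewriting. -/
def Steps : Fm → Fm → Prop := Relation.ReflTransGen Step

/-- A formula is in normal form when no rule applies to any of its subterms. -/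
def NormalForm (t : Fm) : Prop := ¬ ∃ u, Step t u

/-! `nf` rebuilds a formula bottom-up with smart constructors that apply the rules of `R_B`
at the root. Every rule instance, hence every step, leaves `nf` unchanged, and every formula
rewrites to its `nf`; so two reducts of `t` both rewrite to `nf t` (this is in fact
confluence). Invariance under `¬¬g → g` rests on `nf` never producing a double negation. -/

namespace Fm

lemma ne_not_self (t : Fm) : t ≠ .not t := by
  induction t <;> simp_all

lemma ne_not_not_self (t : Fm) : t ≠ .not (.not t) := by
  induction t <;> simp_all

def mkNot : Fm → Fm
  | .not g => g
  | t => .not t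

def mkAnd (a b : Fm) : Fm :=
  if a = .not .one then .not .one
  else if b = .not .one then .not .one
  else if a = .one then b
  else if b = .one then a
  else if a = b then a
  else if a = .not b then .not .one
  else if b = .not a then .not .one
  else .and a b

def mkOr (a b : Fm) : Fm :=
  if a = .one then .one
  else if b = .one then .one
  else if a = .not .one then b
  else if b = .not .one then a
  else if a = b then a
  else if a = .not b then .one
  else if b = .not a then .one
  else .or a b

def nf : Fm → Fm
  | .var n => .var n
  | .zero => .not .one
  | .one => .one
  | .not t => mkNot (nf t)
  | .and t u => mkAnd (nf t) (nf u)
  | .or t u => mkOr (nf t) (nf u)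

def NoDoubleNeg (a : Fm) : Prop := ∀ b, a ≠ .not (.not b)

lemma NoDoubleNeg.mkNot {a : Fm} (h : a.NoDoubleNeg) : a.mkNot.NoDoubleNeg := by
  cases a <;> simp_all [Fm.mkNot, NoDoubleNeg]

lemma NoDoubleNeg.mkAnd {a b : Fm} (ha : a.NoDoubleNeg) (hb : b.NoDoubleNeg) :
    (Fm.mkAnd a b).NoDoubleNeg := by
  unfold Fm.mkAnd; split_ifs <;> simp_all [NoDoubleNeg]

lemma NoDoubleNeg.mkOr {a b : Fm} (ha : a.NoDoubleNeg) (hb : b.NoDoubleNeg) :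
    (Fm.mkOr a b).NoDoubleNeg := by
  unfold Fm.mkOr; split_ifs <;> simp_all [NoDoubleNeg]

lemma noDoubleNeg_nf (t : Fm) : t.nf.NoDoubleNeg := by
  induction t with
  | not t ih => exact ih.mkNot
  | and t u iht ihu => exact iht.mkAnd ihu
  | or t u iht ihu => exact iht.mkOr ihu
  | _ => simp [nf, NoDoubleNeg]

lemma mkNot_mkNot {a : Fm} (h : a.NoDoubleNeg) : a.mkNot.mkNot = a := by
  cases a with
  | not b => cases b <;> simp_all [mkNot, NoDoubleNeg]
  | _ => rfl

lemma mkAnd_self (a : Fm) : mkAnd a a = a := by unfold mkAnd; grind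
lemma mkAnd_not_one_right (a : Fm) : mkAnd a (.not .one) = .not .one := by unfold mkAnd; grind
lemma mkAnd_not_one_left (a : Fm) : mkAnd (.not .one) a = .not .one := by unfold mkAnd; grind
lemma mkAnd_one_right (a : Fm) : mkAnd a .one = a := by unfold mkAnd; grind
lemma mkAnd_one_left (a : Fm) : mkAnd .one a = a := by unfold mkAnd; grind

lemma mkAnd_mkNot_right (a : Fm) : mkAnd a a.mkNot = .not .one := by
  cases a <;> simp only [mkNot] <;> unfold mkAnd <;> grind [ne_not_self, ne_not_not_self]

lemma mkAnd_mkNot_left (a : Fm) : mkAnd a.mkNot a = .not .one := by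
  cases a <;> simp only [mkNot] <;> unfold mkAnd <;> grind [ne_not_self, ne_not_not_self]

lemma mkOr_self (a : Fm) : mkOr a a = a := by unfold mkOr; grind
lemma mkOr_one_right (a : Fm) : mkOr a .one = .one := by unfold mkOr; grind
lemma mkOr_one_left (a : Fm) : mkOr .one a = .one := by unfold mkOr; grind
lemma mkOr_not_one_right (a : Fm) : mkOr a (.not .one) = a := by unfold mkOr; grind
lemma mkOr_not_one_left (a : Fm) : mkOr (.not .one) a = a := by unfold mkOr; grind

lemma mkOr_mkNot_right {a : Fm} (h : a.NoDoubleNeg) : mkOr a a.mkNot = .one := by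
  cases a <;> simp only [mkNot] <;> unfold mkOr <;>
    grind [ne_not_self, ne_not_not_self, NoDoubleNeg]

lemma mkOr_mkNot_left {a : Fm} (h : a.NoDoubleNeg) : mkOr a.mkNot a = .one := by
  cases a <;> simp only [mkNot] <;> unfold mkOr <;>
    grind [ne_not_self, ne_not_not_self, NoDoubleNeg]

end Fm

open Fm

lemma RB.nf_eq {t u : Fm} (h : RB t u) : t.nf = u.nf := by
  cases h with
  | zero_def => rfl
  | not_not => exact mkNot_mkNot (noDoubleNeg_nf u)
  | and_idem => exact mkAnd_self _
  | or_idem => exact mkOr_self _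
  | and_notone_r => exact mkAnd_not_one_right _
  | and_notone_l => exact mkAnd_not_one_left _
  | or_one_r => exact mkOr_one_right _
  | or_one_l => exact mkOr_one_left _
  | and_one_r => exact mkAnd_one_right _
  | and_one_l => exact mkAnd_one_left _
  | or_notone_r => exact mkOr_not_one_right _
  | or_notone_l => exact mkOr_not_one_left _
  | and_not_self_r => exact mkAnd_mkNot_right _
  | and_not_self_l => exact mkAnd_mkNot_left _
  | or_not_self_r g => exact mkOr_mkNot_right (noDoubleNeg_nf g)
  | or_not_self_l g => exact mkOr_mkNot_left (noDoubleNeg_nf g)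

lemma Step.nf_eq {t u : Fm} (h : Step t u) : t.nf = u.nf := by
  induction h with
  | rule h => exact h.nf_eq
  | _ _ ih => simp only [nf, ih]

namespace Steps

lemma of_rule {t u : Fm} (h : RB t u) : Steps t u :=
  .single (.rule h)

lemma not {t u : Fm} (h : Steps t u) : Steps (.not t) (.not u) :=
  h.lift Fm.not fun _ _ => Step.not

lemma and {t t' u u' : Fm} (ht : Steps t t') (hu : Steps u u') :
    Steps (.and t u) (.and t' u') :=
  (ht.lift (Fm.and · u) fun _ _ => Step.and_left).trans
    (hu.lift (Fm.and t') fun _ _ => Step.and_right)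

lemma or {t t' u u' : Fm} (ht : Steps t t') (hu : Steps u u') :
    Steps (.or t u) (.or t' u') :=
  (ht.lift (Fm.or · u) fun _ _ => Step.or_left).trans
    (hu.lift (Fm.or t') fun _ _ => Step.or_right)

lemma mkNot (a : Fm) : Steps (.not a) a.mkNot := by
  cases a
  case not b => exact of_rule (.not_not b)
  all_goals exact .refl

lemma mkAnd (a b : Fm) : Steps (.and a b) (Fm.mkAnd a b) := by
  unfold Fm.mkAnd
  split_ifs <;> subst_vars <;> first | exact .refl | exact of_rule (by constructor)

lemma mkOr (a b : Fm) : Steps (.or a b) (Fm.mkOr a b) := by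
  unfold Fm.mkOr
  split_ifs <;> subst_vars <;> first | exact .refl | exact of_rule (by constructor)

lemma to_nf (t : Fm) : Steps t t.nf := by
  induction t with
  | var n => exact .refl
  | zero => exact of_rule .zero_def
  | one => exact .refl
  | not t ih => exact ih.not.trans (mkNot _)
  | and t u iht ihu => exact (iht.and ihu).trans (mkAnd _ _)
  | or t u iht ihu => exact (iht.or ihu).trans (mkOr _ _)

end Steps

/-- Local confluence of `R_B`: any two single steps from a common formula
can be joined by finitely many further steps. -/
theorem RB_locally_confluent :
    ∀ t u u' : Fm, Step t u → Step t u' → ∃ v : Fm, Steps u v ∧ Steps u' v := by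
  intro t u u' h h'
  exact ⟨t.nf, h.nf_eq ▸ Steps.to_nf u, h'.nf_eq ▸ Steps.to_nf u'⟩
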